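/- Let $0 < \theta < 1 < p < r$, $A > 0$, $G_0 > 0$, and $0 < C < m(t_0)$ where $m(t) = t^{\theta+p-1}A - t^{\theta+r-1}G_0$ and $t_0$ is the unique maximizer of $m$ on $(0,\infty)$. Then there exist unique $t_1, t_2$ with $0 < t_1 < t_0 < t_2$ such that $m(t_1) = m(t_2) = C$. Moreover $m'(t_1) > 0$ and $m'(t_2) < 0$. -/

import Mathlib

/-!
Write `m t = t ^ a * A - t ^ b * G` with `a = θ + p - 1 < b = θ + r - 1`. For `t > 0`,
`m' t = t ^ (a - 1) * (a * A - b * G * t ^ (b - a))`, whose sign is that of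
`t₀ - t` for `t₀ = (a * A / (b * G)) ^ (b - a)⁻¹`. So `m` increases strictly on `[0, t₀]` from
`m 0 = 0` and decreases strictly on `[t₀, ∞)` to negative values; the intermediate value theorem
gives the two solutions of `m t = C`, strict monotonicity their uniqueness.
-/

open Real Set Filter

noncomputable section

def powDiff (a b A G t : ℝ) : ℝ := t ^ a * A - t ^ b * G

def powDiffCrit (a b A G : ℝ) : ℝ := (a * A / (b * G)) ^ (b - a)⁻¹

variable {a b A G t : ℝ}

lemma continuous_powDiff (ha : 0 ≤ a) (hb : 0 ≤ b) : Continuous (powDiff a b A G) :=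
  ((continuous_rpow_const ha).mul continuous_const).sub
    ((continuous_rpow_const hb).mul continuous_const)

lemma powDiff_zero (ha : a ≠ 0) (hb : b ≠ 0) : powDiff a b A G 0 = 0 := by
  simp [powDiff, zero_rpow ha, zero_rpow hb]

lemma hasDerivAt_powDiff (ht : 0 < t) :
    HasDerivAt (powDiff a b A G) (t ^ (a - 1) * (a * A - b * G * t ^ (b - a))) t := by
  have hsplit : t ^ (b - 1) = t ^ (a - 1) * t ^ (b - a) := by rw [← rpow_add ht]; ring_nf
  refine (((hasDerivAt_rpow_const (Or.inl ht.ne')).mul_const A).sub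
    ((hasDerivAt_rpow_const (Or.inl ht.ne')).mul_const G)).congr_deriv ?_
  rw [hsplit]; ring

lemma powDiffCrit_pos (ha : 0 < a) (hab : a < b) (hA : 0 < A) (hG : 0 < G) :
    0 < powDiffCrit a b A G := by
  have hb : 0 < b := ha.trans hab
  unfold powDiffCrit; positivity

lemma lt_powDiffCrit_iff (ha : 0 < a) (hab : a < b) (hA : 0 < A) (hG : 0 < G) (ht : 0 ≤ t) :
    t < powDiffCrit a b A G ↔ b * G * t ^ (b - a) < a * A := by
  have hbG : 0 < b * G := mul_pos (ha.trans hab) hG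
  rw [powDiffCrit, lt_rpow_inv_iff_of_pos ht (by positivity) (sub_pos.2 hab), lt_div_iff₀' hbG]

lemma powDiffCrit_lt_iff (ha : 0 < a) (hab : a < b) (hA : 0 < A) (hG : 0 < G) (ht : 0 ≤ t) :
    powDiffCrit a b A G < t ↔ a * A < b * G * t ^ (b - a) := by
  have hbG : 0 < b * G := mul_pos (ha.trans hab) hG
  rw [powDiffCrit, rpow_inv_lt_iff_of_pos (by positivity) ht (sub_pos.2 hab), div_lt_iff₀' hbG]

lemma deriv_powDiff_pos (ha : 0 < a) (hab : a < b) (hA : 0 < A) (hG : 0 < G) (ht : 0 < t)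
    (htc : t < powDiffCrit a b A G) : 0 < deriv (powDiff a b A G) t := by
  rw [(hasDerivAt_powDiff ht).deriv]
  have := (lt_powDiffCrit_iff ha hab hA hG ht.le).1 htc
  exact mul_pos (rpow_pos_of_pos ht _) (by linarith)

lemma deriv_powDiff_neg (ha : 0 < a) (hab : a < b) (hA : 0 < A) (hG : 0 < G)
    (htc : powDiffCrit a b A G < t) : deriv (powDiff a b A G) t < 0 := by
  have ht : 0 < t := (powDiffCrit_pos ha hab hA hG).trans htc
  rw [(hasDerivAt_powDiff ht).deriv]
  have := (powDiffCrit_lt_iff ha hab hA hG ht.le).1 htc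
  exact mul_neg_of_pos_of_neg (rpow_pos_of_pos ht _) (by linarith)

lemma strictMonoOn_powDiff (ha : 0 < a) (hab : a < b) (hA : 0 < A) (hG : 0 < G) :
    StrictMonoOn (powDiff a b A G) (Icc 0 (powDiffCrit a b A G)) := by
  refine strictMonoOn_of_deriv_pos (convex_Icc _ _)
    (continuous_powDiff ha.le (ha.trans hab).le).continuousOn fun t ht => ?_
  rw [interior_Icc] at ht
  exact deriv_powDiff_pos ha hab hA hG ht.1 ht.2

lemma strictAntiOn_powDiff (ha : 0 < a) (hab : a < b) (hA : 0 < A) (hG : 0 < G) :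
    StrictAntiOn (powDiff a b A G) (Ici (powDiffCrit a b A G)) := by
  refine strictAntiOn_of_deriv_neg (convex_Ici _)
    (continuous_powDiff ha.le (ha.trans hab).le).continuousOn fun t ht => ?_
  rw [interior_Ici] at ht
  exact deriv_powDiff_neg ha hab hA hG ht

lemma powDiff_lt_powDiffCrit (ha : 0 < a) (hab : a < b) (hA : 0 < A) (hG : 0 < G) (ht : 0 ≤ t)
    (htc : t ≠ powDiffCrit a b A G) :
    powDiff a b A G t < powDiff a b A G (powDiffCrit a b A G) := by
  have hc := powDiffCrit_pos ha hab hA hG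
  rcases htc.lt_or_gt with htc | htc
  · exact strictMonoOn_powDiff ha hab hA hG ⟨ht, htc.le⟩ ⟨hc.le, le_rfl⟩ htc
  · exact strictAntiOn_powDiff ha hab hA hG self_mem_Ici htc.le htc

lemma eventually_powDiff_neg (hab : a < b) (hA : 0 < A) (hG : 0 < G) :
    ∀ᶠ t in atTop, powDiff a b A G t < 0 := by
  filter_upwards [eventually_gt_atTop ((A / G) ^ (b - a)⁻¹)] with t ht
  have ht0 : 0 < t := (rpow_pos_of_pos (div_pos hA hG) _).trans ht
  rw [rpow_inv_lt_iff_of_pos (div_pos hA hG).le ht0.le (sub_pos.2 hab), div_lt_iff₀ hG] at ht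
  have hsplit : t ^ b = t ^ a * t ^ (b - a) := by rw [← rpow_add ht0]; ring_nf
  rw [powDiff, hsplit]
  nlinarith [rpow_pos_of_pos ht0 a]

end

theorem stmt6_general (p r θ A G₀ C : ℝ) (hθ0 : 0 < θ) (hp : 1 < p) (hpr : p < r)
    (hA : 0 < A) (hG : 0 < G₀)
    (m : ℝ → ℝ) (hm : m = fun t => t ^ (θ + p - 1) * A - t ^ (θ + r - 1) * G₀)
    (t₀ : ℝ) (ht₀pos : 0 < t₀) (ht₀max : ∀ t ∈ Ioi (0 : ℝ), t ≠ t₀ → m t < m t₀)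
    (hC0 : 0 < C) (hC : C < m t₀) :
    ∃ t₁ t₂ : ℝ, 0 < t₁ ∧ t₁ < t₀ ∧ t₀ < t₂ ∧
      m t₁ = C ∧ m t₂ = C ∧
      0 < deriv m t₁ ∧ deriv m t₂ < 0 ∧
      (∀ s : ℝ, 0 < s → s < t₀ → m s = C → s = t₁) ∧
      (∀ s : ℝ, t₀ < s → m s = C → s = t₂) := by
  have ha : 0 < θ + p - 1 := by linarith
  have hab : θ + p - 1 < θ + r - 1 := by linarith
  replace hm : m = powDiff (θ + p - 1) (θ + r - 1) A G₀ := hm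
  subst hm
  obtain rfl : t₀ = powDiffCrit (θ + p - 1) (θ + r - 1) A G₀ := by
    by_contra hne
    exact (ht₀max _ (powDiffCrit_pos ha hab hA hG) (Ne.symm hne)).asymm
      (powDiff_lt_powDiffCrit ha hab hA hG ht₀pos.le hne)
  have hcont := continuous_powDiff ha.le (ha.trans hab).le (A := A) (G := G₀)
  obtain ⟨t₁, ⟨ht₁pos, ht₁t₀⟩, ht₁⟩ := intermediate_value_Ioo ht₀pos.le hcont.continuousOn
    (by rw [powDiff_zero ha.ne' (ha.trans hab).ne']; exact ⟨hC0, hC⟩)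
  obtain ⟨T, hTneg, ht₀T⟩ :=
    ((eventually_powDiff_neg hab hA hG).and (eventually_gt_atTop _)).exists
  obtain ⟨t₂, ⟨ht₀t₂, -⟩, ht₂⟩ :=
    intermediate_value_Ioo' ht₀T.le hcont.continuousOn ⟨hTneg.trans hC0, hC⟩
  refine ⟨t₁, t₂, ht₁pos, ht₁t₀, ht₀t₂, ht₁, ht₂, deriv_powDiff_pos ha hab hA hG ht₁pos ht₁t₀,
    deriv_powDiff_neg ha hab hA hG ht₀t₂, fun s hs hst₀ hsC => ?_, fun s ht₀s hsC => ?_⟩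
  · exact (strictMonoOn_powDiff ha hab hA hG).injOn ⟨hs.le, hst₀.le⟩ ⟨ht₁pos.le, ht₁t₀.le⟩
      (hsC.trans ht₁.symm)
  · exact (strictAntiOn_powDiff ha hab hA hG).injOn ht₀s.le ht₀t₂.le (hsC.trans ht₂.symm)

/-- If `0 < C < m(t₀)` where `t₀` is the unique maximizer of
`m(t) = t^{θ+p-1}A - t^{θ+r-1}G₀` on `(0,∞)`, then the equation `m(t) = C` has exactly
two solutions `t₁ < t₀ < t₂`, with `m'(t₁) > 0` and `m'(t₂) < 0`. -/
theorem stmt6 (p r θ A G₀ C : ℝ) (hθ0 : 0 < θ) (hθ1 : θ < 1) (hp : 1 < p) (hpr : p < r)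
    (hA : 0 < A) (hG : 0 < G₀)
    (m : ℝ → ℝ) (hm : m = fun t => t ^ (θ + p - 1) * A - t ^ (θ + r - 1) * G₀)
    (t₀ : ℝ) (ht₀pos : 0 < t₀) (ht₀max : ∀ t ∈ Ioi (0 : ℝ), t ≠ t₀ → m t < m t₀)
    (hC0 : 0 < C) (hC : C < m t₀) :
    ∃ t₁ t₂ : ℝ, 0 < t₁ ∧ t₁ < t₀ ∧ t₀ < t₂ ∧
      m t₁ = C ∧ m t₂ = C ∧
      0 < deriv m t₁ ∧ deriv m t₂ < 0 ∧
      (∀ s : ℝ, 0 < s → s < t₀ → m s = C → s = t₁) ∧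
      (∀ s : ℝ, t₀ < s → m s = C → s = t₂) :=
  stmt6_general p r θ A G₀ C hθ0 hp hpr hA hG m hm t₀ ht₀pos ht₀max hC0 hC
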